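/- Let d ≥ 2 be an even integer and Θ a d-small symbol with bipartition λ¹.λ² and charge (σ₁,σ₂), with defining intervals whose right region lies in row 2. Let b² be an addable or removable box of λ² and b¹ an addable or removable box of λ¹, and suppose the charged contents of b² and b¹ (with respect to t = (σ₁, σ₂ + d/2)) are congruent modulo d. Then the charged content of b² is at least d greater than the charged content of b¹. -/

import Mathlib

open scoped Classical

/-- A β-set: a set of integers containing all sufficiently small integers
and no sufficiently large ones. -/
def IsBetaSet (X : Set ℤ) : Prop :=
  (∃ c : ℤ, ∀ z : ℤ, z < c → z ∈ X) ∧ (∃ C : ℤ, ∀ z : ℤ, C ≤ z → z ∉ X)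

/-- `topB X = max X`. -/
noncomputable def topB (X : Set ℤ) : ℤ := sSup X

/-- `botB X = max {z | every integer < z lies in X}`. -/
noncomputable def botB (X : Set ℤ) : ℤ := sSup {z : ℤ | ∀ w : ℤ, w < z → w ∈ X}

/-- The charge `s(X)` of a β-set `X`, computed with the cutoff `c = botB X`. -/
noncomputable def chargeB (X : Set ℤ) : ℤ :=
  ((X ∩ Set.Ici (botB X)).ncard : ℤ) + botB X - 1

/-- `elemSeq X j` is the `(j+1)`-st largest element of the β-set `X`. -/
noncomputable def elemSeq (X : Set ℤ) : ℕ → ℤ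
  | 0 => sSup X
  | n + 1 => sSup (X ∩ Set.Iio (elemSeq X n))

/-- The partition `λ(X)` of a β-set `X`, `0`-indexed: `partB X j = λ_{j+1}`,
recovered from `x_j = s(X) + λ_j - j + 1` where `x_j` is the `j`-th largest element. -/
noncomputable def partB (X : Set ℤ) (j : ℕ) : ℕ :=
  (elemSeq X j - chargeB X + j).toNat

/-- The size `|λ(X)|` of the partition of a β-set `X`. -/
noncomputable def sizeB (X : Set ℤ) : ℕ := ∑ᶠ j : ℕ, partB X j

/-- A partition, encoded as a weakly decreasing eventually zero function (0-indexed). -/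
def IsPartition (μ : ℕ → ℕ) : Prop :=
  (∀ j, μ (j + 1) ≤ μ j) ∧ ∃ N, ∀ j, N ≤ j → μ j = 0

/-- The β-set `{s + λ_j - j + 1 : j ≥ 1}` of the partition `μ` with charge `s`. -/
def betaOf (μ : ℕ → ℕ) (s : ℤ) : Set ℤ :=
  {x : ℤ | ∃ j : ℕ, x = s + (μ j : ℤ) - (j : ℤ)}

/-- The symbol `Θ = (X₁, X₂)` is `d`-small with defining intervals
`I₁ = [a₁,b₁]` and `I₂ = [a₂,b₂]`. -/
structure IsDSmallWith (d : ℤ) (X₁ X₂ : Set ℤ) (a₁ b₁ a₂ b₂ : ℤ) : Prop where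
  len₁ : b₁ - a₁ = d / 2 - 1
  len₂ : b₂ - a₂ = d / 2 - 1
  bot₁ : a₁ ≤ botB X₁
  bot₂ : a₂ ≤ botB X₂
  top₁ : topB X₁ ≤ b₁
  top₂ : topB X₂ ≤ b₂
  cong : d ∣ b₂ - (b₁ + d / 2)

/-- The symbol `Θ = (X₁, X₂)` is `d`-small: it admits some pair of defining intervals. -/
def IsDSmall (d : ℤ) (X₁ X₂ : Set ℤ) : Prop :=
  ∃ a₁ b₁ a₂ b₂ : ℤ, IsDSmallWith d X₁ X₂ a₁ b₁ a₂ b₂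

/-- The row (`1` or `2`) containing the right region. -/
def rightRow (b₁ b₂ : ℤ) : ℕ := if b₁ < b₂ then 2 else 1

/-- The row, as a β-set, containing the right region. -/
def rightSet (X₁ X₂ : Set ℤ) (b₁ b₂ : ℤ) : Set ℤ := if b₁ < b₂ then X₂ else X₁

/-- The row, as a β-set, containing the left region. -/
def leftSet (X₁ X₂ : Set ℤ) (b₁ b₂ : ℤ) : Set ℤ := if b₁ < b₂ then X₁ else X₂

/-- The cardinality `kd` of the middle region. -/
def middleLen (d b₁ b₂ : ℤ) : ℤ := |b₂ - b₁| - d / 2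

/-- The alphabet `{∧, ∨, ×, ∘}` of up-down diagrams: `up = ∧`, `dn = ∨`,
`cross = ×`, `circ = ∘`. -/
inductive UD : Type
  | up
  | dn
  | cross
  | circ
deriving DecidableEq

/-- The up-down diagram `w_ud(Θ)` of a `d`-small symbol with defining intervals:
`wud d X₁ X₂ b₁ b₂ i` is the letter `w_i` for `1 ≤ i ≤ d/2`.  Here the right
region is `[m+1, m+d/2]` with `m = max b₁ b₂ - d/2`, `β_i = m + i`, and
`β_i - kd - d/2 = β_i - |b₂ - b₁|`. -/
noncomputable def wud (d : ℤ) (X₁ X₂ : Set ℤ) (b₁ b₂ : ℤ) (i : ℤ) : UD :=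
  if (max b₁ b₂ - d / 2 + i) ∈ rightSet X₁ X₂ b₁ b₂ then
    if (max b₁ b₂ - d / 2 + i) - |b₂ - b₁| ∈ leftSet X₁ X₂ b₁ b₂ then UD.cross else UD.up
  else
    if (max b₁ b₂ - d / 2 + i) - |b₂ - b₁| ∈ leftSet X₁ X₂ b₁ b₂ then UD.dn else UD.circ

/-- Removing an `e`-cohook in row `1` (the rows get interchanged afterwards). -/
def RemoveCohookRow1 (e : ℤ) (Θ Θ' : Set ℤ × Set ℤ) : Prop :=
  ∃ x : ℤ, x ∈ Θ.1 ∧ x - e ∉ Θ.2 ∧ Θ' = (Θ.2 ∪ {x - e}, Θ.1 \ {x})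

/-- Removing an `e`-cohook in row `2` (the rows get interchanged afterwards). -/
def RemoveCohookRow2 (e : ℤ) (Θ Θ' : Set ℤ × Set ℤ) : Prop :=
  ∃ x : ℤ, x ∈ Θ.2 ∧ x - e ∉ Θ.1 ∧ Θ' = (Θ.2 \ {x}, Θ.1 ∪ {x - e})

/-- Removing an `e`-cohook. -/
def RemoveCohook (e : ℤ) (Θ Θ' : Set ℤ × Set ℤ) : Prop :=
  RemoveCohookRow1 e Θ Θ' ∨ RemoveCohookRow2 e Θ Θ'

/-- The symbol `Θ` has an `e`-cohook. -/
def HasCohook (e : ℤ) (Θ : Set ℤ × Set ℤ) : Prop :=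
  (∃ x : ℤ, x ∈ Θ.1 ∧ x - e ∉ Θ.2) ∨ (∃ x : ℤ, x ∈ Θ.2 ∧ x - e ∉ Θ.1)

/-- `C` is an `e`-cocore of `Θ`: a symbol with no `e`-cohooks obtained from `Θ`
by a finite sequence of `e`-cohook removals. -/
def IsCocoreOf (e : ℤ) (Θ C : Set ℤ × Set ℤ) : Prop :=
  Relation.ReflTransGen (RemoveCohook e) Θ C ∧ ¬ HasCohook e C

/-- The `n`-fold composition of a relation. -/
def RelPow {α : Type*} (R : α → α → Prop) : ℕ → α → α → Prop
  | 0 => Eq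
  | n + 1 => fun a c => ∃ b, R a b ∧ RelPow R n b c

/-- `(a, b)` (row `a`, column `b`, both `1`-indexed) is a box of the partition `μ`
(`μ` is `0`-indexed, so `μ (a-1)` is the `a`-th part `λ_a`). -/
def IsBox (μ : ℕ → ℕ) (a b : ℕ) : Prop := 1 ≤ a ∧ 1 ≤ b ∧ b ≤ μ (a - 1)

/-- `(a, b)` is an addable box of `μ`: adjoining it yields a partition. -/
def IsAddableBox (μ : ℕ → ℕ) (a b : ℕ) : Prop :=
  1 ≤ a ∧ b = μ (a - 1) + 1 ∧ (a = 1 ∨ b ≤ μ (a - 2))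

/-- `(a, b)` is a removable box of `μ`: deleting it yields a partition. -/
def IsRemovableBox (μ : ℕ → ℕ) (a b : ℕ) : Prop :=
  1 ≤ a ∧ b = μ (a - 1) ∧ 1 ≤ b ∧ μ a < b

/-- The charged content `t + b - a` of the box in row `a` and column `b`,
with respect to the charge `t`. -/
def chCont (t : ℤ) (a b : ℕ) : ℤ := t + (b : ℤ) - (a : ℤ)

/-- Selecting the component `j ∈ {1, 2}` of a bipartition. -/
def compPart (μ₁ μ₂ : ℕ → ℕ) (j : ℕ) : ℕ → ℕ := if j = 1 then μ₁ else μ₂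

/-- Selecting the component `j ∈ {1, 2}` of a pair of charges. -/
def compT (t₁ t₂ : ℤ) (j : ℕ) : ℤ := if j = 1 then t₁ else t₂

/-- The box `(a, b)` in component `j` is a good removable `i`-box of the
bipartition `(μ₁, μ₂)` with charges `(t₁, t₂)`, where `r` is the row containing
the right region: it is a removable box of charged content `≡ i (mod d)` and
there is no addable box `A` of either component with charged content `≡ i (mod d)`
such that either `A` has strictly larger charged content, or `A` has equal
charged content and lies in component `r`. -/
def IsGoodRemovableBox (d : ℤ) (μ₁ μ₂ : ℕ → ℕ) (t₁ t₂ : ℤ) (r : ℕ) (i : ℤ)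
    (j a b : ℕ) : Prop :=
  (j = 1 ∨ j = 2) ∧ IsRemovableBox (compPart μ₁ μ₂ j) a b ∧
    d ∣ chCont (compT t₁ t₂ j) a b - i ∧
    ∀ j' a' b' : ℕ, (j' = 1 ∨ j' = 2) → IsAddableBox (compPart μ₁ μ₂ j') a' b' →
      d ∣ chCont (compT t₁ t₂ j') a' b' - i →
      ¬ (chCont (compT t₁ t₂ j) a b < chCont (compT t₁ t₂ j') a' b' ∨
        (chCont (compT t₁ t₂ j') a' b' = chCont (compT t₁ t₂ j) a b ∧ j' = r))

/-- The position of a letter in the order `× < ∧ < ∨ < ∘`. -/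
def udIdx : UD → ℕ
  | UD.cross => 0
  | UD.up => 1
  | UD.dn => 2
  | UD.circ => 3

/-- The word `w₁ ⋯ w_{d/2}` reads `×^α ∧^w ∨^h ∘^β`: all `×`'s first, then all
`∧`'s, then all `∨`'s, then all `∘`'s. -/
def SortedUD (d : ℤ) (w : ℤ → UD) : Prop :=
  ∀ i j : ℤ, 1 ≤ i → i ≤ j → j ≤ d / 2 → udIdx (w i) ≤ udIdx (w j)

/-- The number of occurrences of the letter `u` in the word `w₁ ⋯ w_{d/2}`. -/
noncomputable def countUD (d : ℤ) (w : ℤ → UD) (u : UD) : ℕ :=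
  ((Finset.Icc (1 : ℤ) (d / 2)).filter fun i => w i = u).card

/-- `w'` is obtained from `w` by permuting the letters `∧` and `∨` among the
positions carrying `∧` or `∨`, leaving every `×` and `∘` in place. -/
def PermUpDn (d : ℤ) (w w' : ℤ → UD) : Prop :=
  (∀ i : ℤ, 1 ≤ i → i ≤ d / 2 →
    ((w' i = UD.cross ↔ w i = UD.cross) ∧ (w' i = UD.circ ↔ w i = UD.circ))) ∧
  countUD d w' UD.up = countUD d w UD.up

/-- Replace every letter `∧` by `∨`, leaving the other letters unchanged. -/
def replaceUp : UD → UD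
  | UD.up => UD.dn
  | u => u

section Helpers

variable {X : Set ℤ}

lemma beta_ne (hX : IsBetaSet X) : X.Nonempty := by
  obtain ⟨c, hc⟩ := hX.1; exact ⟨c - 1, hc _ (by omega)⟩

lemma beta_bdd (hX : IsBetaSet X) : BddAbove X := by
  obtain ⟨C, hC⟩ := hX.2
  exact ⟨C, fun x hx => le_of_not_gt fun h => hC x h.le hx⟩

lemma mem_le_top (hX : IsBetaSet X) {x : ℤ} (hx : x ∈ X) : x ≤ topB X :=
  le_csSup (beta_bdd hX) hx

lemma lt_bot_mem (hX : IsBetaSet X) {w : ℤ} (hw : w < botB X) : w ∈ X := by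
  obtain ⟨c, hc⟩ := hX.1
  obtain ⟨C, hC⟩ := hX.2
  have hne : {z : ℤ | ∀ w : ℤ, w < z → w ∈ X}.Nonempty := ⟨c, fun w hw => hc w hw⟩
  have hbdd : BddAbove {z : ℤ | ∀ w : ℤ, w < z → w ∈ X} := by
    refine ⟨C, fun z hz => ?_⟩
    by_contra h
    exact hC C le_rfl (hz C (by omega))
  have := Int.csSup_mem hne hbdd
  exact this w hw

lemma elem_step (hX : IsBetaSet X) (n : ℕ) :
    elemSeq X (n + 1) ∈ X ∧ elemSeq X (n + 1) < elemSeq X n := by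
  obtain ⟨c, hc⟩ := hX.1
  have hne : (X ∩ Set.Iio (elemSeq X n)).Nonempty :=
    ⟨min c (elemSeq X n) - 1, hc _ (by omega), by simp only [Set.mem_Iio]; omega⟩
  have hbdd : BddAbove (X ∩ Set.Iio (elemSeq X n)) :=
    (beta_bdd hX).mono Set.inter_subset_left
  have h := Int.csSup_mem hne hbdd
  exact ⟨h.1, h.2⟩

lemma elem_mem (hX : IsBetaSet X) (n : ℕ) : elemSeq X n ∈ X := by
  cases n with
  | zero => exact Int.csSup_mem (beta_ne hX) (beta_bdd hX)
  | succ n => exact (elem_step hX n).1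

lemma elem_add (hX : IsBetaSet X) (n k : ℕ) :
    elemSeq X (n + k) ≤ elemSeq X n - k := by
  induction k with
  | zero => simp
  | succ k ih =>
    have h := (elem_step hX (n + k)).2
    push_cast
    have : elemSeq X (n + (k + 1)) < elemSeq X (n + k) := by
      rw [show n + (k + 1) = (n + k) + 1 by ring]; exact h
    omega

lemma elem_le_top (hX : IsBetaSet X) (n : ℕ) : elemSeq X n ≤ topB X - n := by
  have := elem_add hX 0 n
  simpa [topB, elemSeq] using this

lemma fin_upper (hX : IsBetaSet X) : (X ∩ Set.Ici (botB X)).Finite := by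
  obtain ⟨C, hC⟩ := hX.2
  refine (Set.finite_Ico (botB X) C).subset fun x hx => ?_
  exact ⟨hx.2, lt_of_not_ge fun h => hC x h hx.1⟩

lemma charge_ge (hX : IsBetaSet X) : botB X - 1 ≤ chargeB X := by
  have : (0:ℤ) ≤ ((X ∩ Set.Ici (botB X)).ncard : ℤ) := Nat.cast_nonneg _
  unfold chargeB; omega

lemma bot_le_top (hX : IsBetaSet X) : botB X - 1 ≤ topB X :=
  mem_le_top hX (lt_bot_mem hX (by omega))

lemma charge_le (hX : IsBetaSet X) {b : ℤ} (hb : topB X ≤ b) : chargeB X ≤ b := by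
  have hsub : X ∩ Set.Ici (botB X) ⊆ ↑(Finset.Icc (botB X) b) := by
    intro x hx
    simp only [Finset.coe_Icc, Set.mem_Icc]
    exact ⟨hx.2, (mem_le_top hX hx.1).trans hb⟩
  have h1 : (X ∩ Set.Ici (botB X)).ncard ≤ (Finset.Icc (botB X) b).card := by
    rw [← Set.ncard_coe_finset]
    exact Set.ncard_le_ncard hsub (Finset.finite_toSet _)
  rw [Int.card_Icc] at h1
  have h2 := bot_le_top hX
  unfold chargeB
  omega

lemma part_le (hX : IsBetaSet X) {b : ℤ} (hb : topB X ≤ b) (j : ℕ) :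
    (partB X j : ℤ) ≤ b - chargeB X := by
  have h1 := elem_le_top hX j
  have h2 := charge_le hX hb
  unfold partB
  omega

lemma part_vanish (hX : IsBetaSet X) {j : ℕ}
    (hj : chargeB X - botB X + 1 ≤ (j : ℤ)) : partB X j = 0 := by
  set m : ℕ := (X ∩ Set.Ici (botB X)).ncard with hm
  have hsm : chargeB X = (m : ℤ) + botB X - 1 := rfl
  have hmono : ∀ i k : ℕ, i ≤ k → elemSeq X k ≤ elemSeq X i - (k - i : ℕ) := by
    intro i k hik
    have := elem_add hX i (k - i)
    rwa [Nat.add_sub_cancel' hik] at this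
  have hxm : elemSeq X m ≤ botB X - 1 := by
    by_contra h
    push_neg at h
    have hbot : botB X ≤ elemSeq X m := by omega
    have hfin := fin_upper hX
    have hsub : (Finset.range (m + 1)).image (elemSeq X) ⊆ hfin.toFinset := by
      intro x hx
      simp only [Finset.mem_image, Finset.mem_range] at hx
      obtain ⟨i, hi, rfl⟩ := hx
      rw [Set.Finite.mem_toFinset]
      refine ⟨elem_mem hX i, le_trans hbot ?_⟩
      have := hmono i m (by omega)
      omega
    have hinj : Set.InjOn (elemSeq X) ↑(Finset.range (m + 1)) := by
      intro i _ k _ hik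
      by_contra hne
      rcases Nat.lt_or_ge i k with h' | h'
      · have := hmono i k h'.le
        have : (0:ℤ) < (k - i : ℕ) := by
          have : 0 < k - i := by omega
          exact_mod_cast this
        omega
      · have h'' : k < i := by omega
        have := hmono k i h''.le
        have : (0:ℤ) < (i - k : ℕ) := by
          have : 0 < i - k := by omega
          exact_mod_cast this
        omega
    have hcard := Finset.card_le_card hsub
    rw [Finset.card_image_of_injOn hinj, Finset.card_range,
      ← Set.ncard_eq_toFinset_card _ hfin] at hcard
    omega
  have hjm : m ≤ j := by omega
  have := hmono m j hjm
  have hjc : ((j - m : ℕ) : ℤ) = (j : ℤ) - m := by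
    push_cast [Nat.cast_sub hjm]; ring
  unfold partB
  omega

lemma content_bounds (hX : IsBetaSet X) {a b : ℤ} (ha : a ≤ botB X) (hb : topB X ≤ b)
    {A B : ℕ} (hbx : IsAddableBox (partB X) A B ∨ IsRemovableBox (partB X) A B) :
    a - 1 ≤ chargeB X + (B : ℤ) - A ∧ chargeB X + (B : ℤ) - A ≤ b := by
  have hA1 : 1 ≤ A := by rcases hbx with h | h <;> exact h.1
  have hBle : (B : ℤ) ≤ (partB X (A - 1) : ℤ) + 1 := by
    rcases hbx with h | h
    · rw [h.2.1]; push_cast; ring_nf; omega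
    · rw [h.2.1]; omega
  have hpartle := part_le hX hb (A - 1)
  have hub : chargeB X + (B : ℤ) - A ≤ b := by
    have : (1:ℤ) ≤ A := by exact_mod_cast hA1
    omega
  refine ⟨?_, hub⟩
  have hsge := charge_ge hX
  rcases hbx with h | h
  · have hB1 : 1 ≤ B := by have := h.2.1; omega
    rcases h.2.2 with h1 | h1
    · subst h1
      have : (1:ℤ) ≤ B := by exact_mod_cast hB1
      push_cast
      omega
    · -- partB X (A-2) ≥ 1, so ¬ vanish at A-2
      have hnz : partB X (A - 2) ≠ 0 := by omega
      have hlt : ((A - 2 : ℕ) : ℤ) < chargeB X - botB X + 1 := by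
        by_contra hh
        exact hnz (part_vanish hX (by omega))
      have hAle : (A : ℤ) ≤ ((A - 2 : ℕ) : ℤ) + 2 := by
        have : A ≤ (A - 2) + 2 := by omega
        exact_mod_cast this
      have : (1:ℤ) ≤ B := by exact_mod_cast hB1
      omega
  · have hB1 : 1 ≤ B := h.2.2.1
    have hnz : partB X (A - 1) ≠ 0 := by have := h.2.1; omega
    have hlt : ((A - 1 : ℕ) : ℤ) < chargeB X - botB X + 1 := by
      by_contra hh
      exact hnz (part_vanish hX (by omega))
    have hAle : (A : ℤ) ≤ ((A - 1 : ℕ) : ℤ) + 1 := by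
      have : A ≤ (A - 1) + 1 := by omega
      exact_mod_cast this
    have : (1:ℤ) ≤ B := by exact_mod_cast hB1
    omega

end Helpers

/-- For a `d`-small symbol whose right region lies in row `2`
(`b₁ < b₂`), given an addable-or-removable box `(A₂,B₂)` of `λ²` and an
addable-or-removable box `(A₁,B₁)` of `λ¹` whose charged contents (w.r.t.
`t = (σ₁, σ₂ + d/2)`) are congruent modulo `d`, the charged content of the former is
at least `d` greater than that of the latter. -/
theorem stmt5 (d : ℤ) (hd : 2 ≤ d) (hdE : Even d)
    (X₁ X₂ : Set ℤ) (hX₁ : IsBetaSet X₁) (hX₂ : IsBetaSet X₂)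
    (a₁ b₁ a₂ b₂ : ℤ) (hsm : IsDSmallWith d X₁ X₂ a₁ b₁ a₂ b₂)
    (hrow : b₁ < b₂)
    (A₂ B₂ A₁ B₁ : ℕ)
    (hbx₂ : IsAddableBox (partB X₂) A₂ B₂ ∨ IsRemovableBox (partB X₂) A₂ B₂)
    (hbx₁ : IsAddableBox (partB X₁) A₁ B₁ ∨ IsRemovableBox (partB X₁) A₁ B₁)
    (hcong : d ∣ chCont (chargeB X₂ + d / 2) A₂ B₂ - chCont (chargeB X₁) A₁ B₁) :
    chCont (chargeB X₁) A₁ B₁ + d ≤ chCont (chargeB X₂ + d / 2) A₂ B₂ := by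
  obtain ⟨h1l, h1u⟩ := content_bounds hX₁ hsm.bot₁ hsm.top₁ hbx₁
  obtain ⟨h2l, h2u⟩ := content_bounds hX₂ hsm.bot₂ hsm.top₂ hbx₂
  have hlen := hsm.len₂
  obtain ⟨e, he⟩ : ∃ e, d / 2 = e := ⟨_, rfl⟩
  rw [he] at hlen hcong ⊢
  unfold chCont at hcong ⊢
  have hpos : 0 < chargeB X₂ + e + (B₂ : ℤ) - A₂ - (chargeB X₁ + (B₁ : ℤ) - A₁) := by
    omega
  have hled := Int.le_of_dvd hpos hcong
  omega
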